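/- Let x ∈ [l,u] and ε ≥ 0. Define the criticality measure χ(x) = max{ −∇f(x)·d : x + d ∈ [l,u], ‖d‖ ≤ 1 }. Then χ(x) ≤ ‖proj_{T(x,ε)}(−∇f(x))‖ + ε √n ‖proj_{N(x,ε)}(−∇f(x))‖. -/

import Mathlib

open scoped RealInnerProductSpace

/-- The box `[l, u]` in `ℝⁿ`. -/
def Box {n : ℕ} (l u : EuclideanSpace ℝ (Fin n)) : Set (EuclideanSpace ℝ (Fin n)) :=
  {y | ∀ j, l j ≤ y j ∧ y j ≤ u j}

/-- The ε-normal cone `N(x, ε)`. -/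
def NCone {n : ℕ} (l u x : EuclideanSpace ℝ (Fin n)) (ε : ℝ) :
    Set (EuclideanSpace ℝ (Fin n)) :=
  {v | ∃ a b : Fin n → ℝ, (∀ j, 0 ≤ a j) ∧ (∀ j, 0 ≤ b j) ∧
    (∀ j, ¬ (x j ≤ l j + ε) → a j = 0) ∧ (∀ j, ¬ (u j - ε ≤ x j) → b j = 0) ∧
    v = ∑ j, (b j - a j) • EuclideanSpace.single j (1:ℝ)}

/-- The ε-tangent cone `T(x, ε)` as the polar of `N(x, ε)`. -/
def TCone {n : ℕ} (l u x : EuclideanSpace ℝ (Fin n)) (ε : ℝ) :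
    Set (EuclideanSpace ℝ (Fin n)) :=
  {d | ∀ v ∈ NCone l u x ε, ⟪d, v⟫ ≤ 0}


/-!
`N(x, ε)` is a convex cone and `T(x, ε)` its polar, so by Moreau's decomposition
`-∇f(x) = p_T + p_N` with `p_T, p_N` the two projections. For a feasible step `d` with `‖d‖ ≤ 1`,
`⟪p_T, d⟫ ≤ ‖p_T‖` by Cauchy–Schwarz. A coordinate of `p_N` can only be negative (positive) at an
`ε`-active lower (upper) bound, where feasibility forces `d_j ≥ -ε` (`d_j ≤ ε`); hence
`⟪p_N, d⟫ ≤ ε ‖p_N‖₁ ≤ ε √n ‖p_N‖`.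
-/

section ConeProjection

variable {E : Type*} [NormedAddCommGroup E] [InnerProductSpace ℝ E] {z p : E}

theorem Convex.inner_sub_sub_nonpos_of_forall_norm_sub_le {K : Set E} (hK : Convex ℝ K)
    (hp : p ∈ K) (hmin : ∀ y ∈ K, ‖z - p‖ ≤ ‖z - y‖) {w : E} (hw : w ∈ K) :
    ⟪z - p, w - p⟫ ≤ 0 :=
  have : Nonempty K := ⟨⟨p, hp⟩⟩
  (norm_eq_iInf_iff_real_inner_le_zero hK hp).1
    (le_antisymm (le_ciInf fun y => hmin y y.2)
      (ciInf_le ⟨0, by rintro _ ⟨y, rfl⟩; positivity⟩ (⟨p, hp⟩ : K))) w hw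

theorem eq_sub_of_inner_sub_eq_zero {q : E} (hq : ⟪z - q, q⟫ = 0) (hpq : ⟪p, q⟫ ≤ 0)
    (hle : ‖z - p‖ ≤ ‖q‖) : p = z - q := by
  have hsplit : ‖z - p‖ ^ 2 = ‖q‖ ^ 2 + 2 * (⟪z - q, q⟫ - ⟪p, q⟫) + ‖z - q - p‖ ^ 2 := by
    rw [show z - p = q + (z - q - p) by abel, norm_add_sq_real,
      inner_sub_right, real_inner_comm q, real_inner_comm q]
  have hzero : ‖z - q - p‖ ^ 2 ≤ 0 := by
    nlinarith [pow_le_pow_left₀ (norm_nonneg _) hle 2]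
  rw [eq_comm, ← sub_eq_zero, ← norm_eq_zero]
  nlinarith [norm_nonneg (z - q - p)]

namespace PointedCone

variable {K : PointedCone ℝ E}

theorem inner_sub_nonpos_of_forall_norm_sub_le (hp : p ∈ K)
    (hmin : ∀ y ∈ K, ‖z - p‖ ≤ ‖z - y‖) {w : E} (hw : w ∈ K) : ⟪z - p, w⟫ ≤ 0 := by
  simpa using K.convex.inner_sub_sub_nonpos_of_forall_norm_sub_le hp hmin (K.add_mem hp hw)

theorem inner_sub_self_eq_zero_of_forall_norm_sub_le (hp : p ∈ K)
    (hmin : ∀ y ∈ K, ‖z - p‖ ≤ ‖z - y‖) : ⟪z - p, p⟫ = 0 := by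
  have h₀ := K.convex.inner_sub_sub_nonpos_of_forall_norm_sub_le hp hmin K.zero_mem
  have h₂ := K.convex.inner_sub_sub_nonpos_of_forall_norm_sub_le hp hmin
    (K.smul_mem zero_le_two hp)
  rw [zero_sub, inner_neg_right] at h₀
  rw [two_smul, add_sub_cancel_right] at h₂
  linarith

theorem eq_sub_of_forall_norm_sub_le {q : E}
    (hq : q ∈ K) (hminq : ∀ y ∈ K, ‖z - q‖ ≤ ‖z - y‖)
    (hp : ∀ v ∈ K, ⟪p, v⟫ ≤ 0) (hminp : ∀ y, (∀ v ∈ K, ⟪y, v⟫ ≤ 0) → ‖z - p‖ ≤ ‖z - y‖) :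
    p = z - q :=
  eq_sub_of_inner_sub_eq_zero (K.inner_sub_self_eq_zero_of_forall_norm_sub_le hq hminq) (hp q hq)
    (by simpa using hminp (z - q) fun _ => K.inner_sub_nonpos_of_forall_norm_sub_le hq hminq)

end PointedCone

end ConeProjection

theorem EuclideanSpace.sum_abs_le_sqrt_card_mul_norm {ι : Type*} [Fintype ι]
    (v : EuclideanSpace ℝ ι) : ∑ i, |v i| ≤ √(Fintype.card ι) * ‖v‖ := by
  simpa [← EuclideanSpace.real_norm_sq_eq, Real.sqrt_sq (norm_nonneg v)] using
    Real.sum_mul_le_sqrt_mul_sqrt Finset.univ (fun _ => (1 : ℝ)) (fun i => |v i|)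

namespace NCone

variable {n : ℕ} {l u x v w d : EuclideanSpace ℝ (Fin n)} {ε : ℝ}

theorem add_mem (hv : v ∈ NCone l u x ε) (hw : w ∈ NCone l u x ε) :
    v + w ∈ NCone l u x ε := by
  obtain ⟨a, b, ha, hb, hal, hbu, rfl⟩ := hv
  obtain ⟨a', b', ha', hb', hal', hbu', rfl⟩ := hw
  refine ⟨a + a', b + b', fun j => add_nonneg (ha j) (ha' j), fun j => add_nonneg (hb j) (hb' j),
    fun j hj => by simp [hal j hj, hal' j hj], fun j hj => by simp [hbu j hj, hbu' j hj], ?_⟩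
  rw [← Finset.sum_add_distrib]
  exact Finset.sum_congr rfl fun j _ => by rw [← add_smul]; simp only [Pi.add_apply]; ring_nf

theorem smul_mem {t : ℝ} (ht : 0 ≤ t) (hv : v ∈ NCone l u x ε) : t • v ∈ NCone l u x ε := by
  obtain ⟨a, b, ha, hb, hal, hbu, rfl⟩ := hv
  refine ⟨t • a, t • b, fun j => mul_nonneg ht (ha j), fun j => mul_nonneg ht (hb j),
    fun j hj => by simp [hal j hj], fun j hj => by simp [hbu j hj], ?_⟩
  rw [Finset.smul_sum]
  exact Finset.sum_congr rfl fun j _ => by rw [smul_smul]; simp only [Pi.smul_apply]; ring_nf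

theorem zero_mem : (0 : EuclideanSpace ℝ (Fin n)) ∈ NCone l u x ε :=
  ⟨0, 0, fun _ => le_rfl, fun _ => le_rfl, fun _ _ => rfl, fun _ _ => rfl, by simp⟩

variable (l u x ε) in
def pointedCone : PointedCone ℝ (EuclideanSpace ℝ (Fin n)) where
  carrier := NCone l u x ε
  add_mem' := add_mem
  zero_mem' := zero_mem
  smul_mem' t _ hv := smul_mem t.2 hv

theorem le_add_of_apply_neg (hv : v ∈ NCone l u x ε) {j : Fin n} (hj : v j < 0) :
    x j ≤ l j + ε := by
  obtain ⟨a, b, -, hb, hal, -, rfl⟩ := hv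
  by_contra hx
  simp [Pi.single_apply, hal j hx] at hj
  linarith [hb j]

theorem sub_le_of_apply_pos (hv : v ∈ NCone l u x ε) {j : Fin n} (hj : 0 < v j) :
    u j - ε ≤ x j := by
  obtain ⟨a, b, ha, -, -, hbu, rfl⟩ := hv
  by_contra hx
  simp [Pi.single_apply, hbu j hx] at hj
  linarith [ha j]

theorem apply_mul_le (hv : v ∈ NCone l u x ε) (hd : x + d ∈ Box l u) (j : Fin n) :
    v j * d j ≤ ε * |v j| := by
  obtain ⟨hl, hu⟩ : l j ≤ x j + d j ∧ x j + d j ≤ u j := hd j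
  rcases lt_trichotomy (v j) 0 with hj | hj | hj
  · rw [abs_of_neg hj]
    nlinarith [le_add_of_apply_neg hv hj]
  · simp [hj]
  · rw [abs_of_pos hj]
    nlinarith [sub_le_of_apply_pos hv hj]

theorem inner_le (hε : 0 ≤ ε) (hv : v ∈ NCone l u x ε) (hd : x + d ∈ Box l u) :
    ⟪v, d⟫ ≤ ε * √n * ‖v‖ :=
  calc ⟪v, d⟫ ≤ ε * ∑ j, |v j| := by
        rw [Finset.mul_sum]
        simpa [PiLp.inner_apply, mul_comm] using
          Finset.sum_le_sum fun j _ => apply_mul_le hv hd j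
    _ ≤ ε * (√n * ‖v‖) := by
        gcongr
        simpa using EuclideanSpace.sum_abs_le_sqrt_card_mul_norm v
    _ = ε * √n * ‖v‖ := by ring

end NCone

theorem stmt5_general {n : ℕ}
    (l u x gx : EuclideanSpace ℝ (Fin n)) (ε : ℝ) (hε : 0 ≤ ε)
    (pT pN : EuclideanSpace ℝ (Fin n))
    (hpT : pT ∈ TCone l u x ε) (hprojT : ∀ y ∈ TCone l u x ε, ‖-gx - pT‖ ≤ ‖-gx - y‖)
    (hpN : pN ∈ NCone l u x ε) (hprojN : ∀ y ∈ NCone l u x ε, ‖-gx - pN‖ ≤ ‖-gx - y‖) :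
    sSup {r : ℝ | ∃ d : EuclideanSpace ℝ (Fin n), x + d ∈ Box l u ∧ ‖d‖ ≤ 1 ∧
        r = ⟪-gx, d⟫} ≤ ‖pT‖ + ε * Real.sqrt n * ‖pN‖ := by
  have hmoreau : pT = -gx - pN :=
    (NCone.pointedCone l u x ε).eq_sub_of_forall_norm_sub_le hpN hprojN hpT hprojT
  refine Real.sSup_le ?_ (by positivity)
  rintro _ ⟨d, hd, hd_norm, rfl⟩
  calc ⟪-gx, d⟫ = ⟪pT, d⟫ + ⟪pN, d⟫ := by rw [← inner_add_left, hmoreau, sub_add_cancel]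
    _ ≤ ‖pT‖ + ε * √n * ‖pN‖ := by
        gcongr
        · exact (real_inner_le_norm pT d).trans (mul_le_of_le_one_right (norm_nonneg pT) hd_norm)
        · exact NCone.inner_le hε hpN hd

theorem stmt5 {n : ℕ} (f : EuclideanSpace ℝ (Fin n) → ℝ)
    (l u x gx : EuclideanSpace ℝ (Fin n)) (ε : ℝ) (hε : 0 ≤ ε)
    (hlu : ∀ j, l j < u j) (hx : x ∈ Box l u)
    (hgrad : HasGradientAt f gx x)
    (pT pN : EuclideanSpace ℝ (Fin n))
    (hpT : pT ∈ TCone l u x ε) (hprojT : ∀ y ∈ TCone l u x ε, ‖-gx - pT‖ ≤ ‖-gx - y‖)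
    (hpN : pN ∈ NCone l u x ε) (hprojN : ∀ y ∈ NCone l u x ε, ‖-gx - pN‖ ≤ ‖-gx - y‖) :
    sSup {r : ℝ | ∃ d : EuclideanSpace ℝ (Fin n), x + d ∈ Box l u ∧ ‖d‖ ≤ 1 ∧
        r = ⟪-gx, d⟫} ≤ ‖pT‖ + ε * Real.sqrt n * ‖pN‖ :=
  stmt5_general l u x gx ε hε pT pN hpT hprojT hpN hprojN
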